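/- Let w ∈ S_n be a non-identity permutation with last descent g, let m > g be the largest index with w(m) < w(g), and set w' = w t_{g↔m}. If w is not dominant but w' is dominant, then |λ(w')| ≤ |λ(w)| − 2; in particular (g, w(m)) forms an entire connected component of D(w), and λ(w') contains neither (g−1, w(m)) nor (g, w(m)−1). -/

import Mathlib

open MvPolynomial

/-- The Rothe diagram of `w` (0-based): boxes `(i,j)` with `j < w i` and `i < w⁻¹ j`. -/
def rotheDiagram {n : ℕ} (w : Equiv.Perm (Fin n)) : Finset (Fin n × Fin n) :=
  Finset.univ.filter fun p => p.2 < w p.1 ∧ p.1 < w⁻¹ p.2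

/-- The essential set `E(w)`. -/
def essentialSet {n : ℕ} (w : Equiv.Perm (Fin n)) : Finset (Fin n × Fin n) :=
  (rotheDiagram w).filter fun p =>
    (∀ q ∈ rotheDiagram w, ¬(q.1 = p.1 ∧ (q.2 : ℕ) = (p.2 : ℕ) + 1)) ∧
    (∀ q ∈ rotheDiagram w, ¬((q.1 : ℕ) = (p.1 : ℕ) + 1 ∧ q.2 = p.2))

/-- The effective region `λ(w)`: all boxes weakly northwest of some essential set box. -/
def effRegion {n : ℕ} (w : Equiv.Perm (Fin n)) : Finset (Fin n × Fin n) :=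
  Finset.univ.filter fun p => ∃ q ∈ essentialSet w, p.1 ≤ q.1 ∧ p.2 ≤ q.2

/-- `w` is dominant if its Rothe diagram equals its effective region. -/
def IsDominant {n : ℕ} (w : Equiv.Perm (Fin n)) : Prop :=
  rotheDiagram w = effRegion w

/-!
Write `W = w t_{g↔m}` and `c = (g, w(m))`. Since `g` is the last descent, `w` increases after `g`;
with the maximality of `m` this puts `w(k)` below `w(m)` for `g < k < m` and above `w(g)` for
`k > m`, which is exactly what makes `D(W) = D(w) \ {c}`.

A permutation is dominant iff its diagram is a lower set (the diagram is then its own effective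
region). If the box north or west of `c` lay in the lower set `D(W)`, then every box strictly
northwest of `c` would lie in `D(W)` as well, so `D(w) = D(W) ∪ {c}` would be a lower set and `w`
dominant. Hence `|λ(W)| = |D(W)| = |D(w)| - 1 < |λ(w)| - 1`, and the east and south neighbours of
`c` miss `D(W)` because row `g` of `D(W)` stops before column `W(g) = w(m)` and column `w(m)` stops
before row `g`.
-/

theorem isLowerSet_insert {α : Type*} [PartialOrder α] {s : Set α} {a : α} (hs : IsLowerSet s)
    (h : ∀ b < a, b ∈ s) : IsLowerSet (insert a s) := by
  rintro b c hcb (rfl | hb)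
  · exact hcb.lt_or_eq.elim (fun hlt => .inr (h c hlt)) .inl
  · exact .inr (hs hcb hb)

open Equiv

section

variable {n : ℕ}

theorem mem_rotheDiagram {w : Perm (Fin n)} {p : Fin n × Fin n} :
    p ∈ rotheDiagram w ↔ p.2 < w p.1 ∧ p.1 < w⁻¹ p.2 := by
  simp [rotheDiagram]

theorem mk_apply_mem_rotheDiagram {w : Perm (Fin n)} {i k : Fin n} :
    (i, w k) ∈ rotheDiagram w ↔ w k < w i ∧ i < k := by
  simp [mem_rotheDiagram]

theorem isLowerSet_effRegion (w : Perm (Fin n)) :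
    IsLowerSet (effRegion w : Set (Fin n × Fin n)) := by
  rintro p p' hp' hp
  simp only [effRegion, Finset.coe_filter, Finset.mem_univ, true_and, Set.mem_ofPred_eq] at hp ⊢
  obtain ⟨q, hq, h1, h2⟩ := hp
  exact ⟨q, hq, hp'.1.trans h1, hp'.2.trans h2⟩

-- A box of `D(w)` southeast of `p` with the largest coordinate sum is essential.
theorem rotheDiagram_subset_effRegion (w : Perm (Fin n)) : rotheDiagram w ⊆ effRegion w := by
  intro p hp
  obtain ⟨q, hq, hmax⟩ := ((rotheDiagram w).filter (p ≤ ·)).exists_max_image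
    (fun q => (q.1 : ℕ) + q.2) ⟨p, Finset.mem_filter.2 ⟨hp, le_rfl⟩⟩
  rw [Finset.mem_filter] at hq
  have hess : q ∈ essentialSet w := by
    refine Finset.mem_filter.2 ⟨hq.1, fun r hr ⟨h1, h2⟩ => ?_, fun r hr ⟨h1, h2⟩ => ?_⟩
    · have := hmax r (Finset.mem_filter.2
        ⟨hr, hq.2.trans (Prod.mk_le_mk.2 ⟨h1.ge, Fin.le_def.2 (by omega)⟩)⟩)
      omega
    · have := hmax r (Finset.mem_filter.2
        ⟨hr, hq.2.trans (Prod.mk_le_mk.2 ⟨Fin.le_def.2 (by omega), h2.ge⟩)⟩)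
      omega
  simp only [effRegion, Finset.mem_filter, Finset.mem_univ, true_and]
  exact ⟨q, hess, hq.2.1, hq.2.2⟩

theorem isDominant_iff_isLowerSet (w : Perm (Fin n)) :
    IsDominant w ↔ IsLowerSet (rotheDiagram w : Set (Fin n × Fin n)) := by
  refine ⟨fun h => h ▸ isLowerSet_effRegion w, fun h => ?_⟩
  refine (rotheDiagram_subset_effRegion w).antisymm fun p hp => ?_
  simp only [effRegion, Finset.mem_filter, Finset.mem_univ, true_and] at hp
  obtain ⟨q, hq, h1, h2⟩ := hp
  exact h (Prod.mk_le_mk.2 ⟨h1, h2⟩) (Finset.filter_subset _ _ hq)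

-- With columns indexed as `w k`, a box `(i, w k)` can only change when `i` or `k` is `g` or `m`;
-- `hmid` and `htail` settle each of those cases.
theorem rotheDiagram_mul_swap {w : Perm (Fin n)} {g m : Fin n} (hgm : g < m) (hwm : w m < w g)
    (hmid : ∀ k, g < k → k < m → w k < w m) (htail : ∀ k, m < k → w g < w k) :
    rotheDiagram (w * swap g m) = (rotheDiagram w).erase (g, w m) := by
  ext ⟨i, j⟩
  obtain ⟨k, rfl⟩ := w.surjective j
  have hk : w k = (w * swap g m) (swap g m k) := by simp
  rw [Finset.mem_erase, mk_apply_mem_rotheDiagram, hk, mk_apply_mem_rotheDiagram, ← hk]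
  simp only [Perm.mul_apply, ne_eq, Prod.mk.injEq, swap_apply_def]
  split_ifs <;> subst_vars <;> grind

theorem strictMonoOn_Ioi_of_descent_le (w : Perm (Fin n)) (g : Fin n)
    (h : ∀ (j : Fin n) (hj : (j : ℕ) + 1 < n), w ⟨(j : ℕ) + 1, hj⟩ < w j → j ≤ g) :
    StrictMonoOn w (Set.Ioi g) := by
  refine strictMonoOn_of_lt_succ Set.ordConnected_Ioi fun a ha hga _ => ?_
  have hcov := Order.covBy_succ_of_not_isMax ha
  have hsucc : ((Order.succ a : Fin n) : ℕ) = a + 1 := by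
    have := Fin.lt_def.1 hcov.lt
    by_contra hne
    exact hcov.2 (c := ⟨a + 1, by omega⟩) (Fin.lt_def.2 (by simp)) (Fin.lt_def.2 (by simp; omega))
  have hlt : (a : ℕ) + 1 < n := hsucc ▸ (Order.succ a).isLt
  rw [show Order.succ a = ⟨a + 1, hlt⟩ from Fin.ext hsucc]
  refine lt_of_le_of_ne (not_lt.1 fun hdesc => (h a hlt hdesc).not_gt hga) fun he => ?_
  simpa using congrArg Fin.val (w.injective he)

theorem rotheDiagram_mul_swap_of_lastDescent {w : Perm (Fin n)} {g m : Fin n}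
    (hglast : ∀ (j : Fin n) (hj : (j : ℕ) + 1 < n), w ⟨(j : ℕ) + 1, hj⟩ < w j → j ≤ g)
    (hgm : g < m) (hwm : w m < w g) (hmmax : ∀ m' : Fin n, g < m' → w m' < w g → m' ≤ m) :
    rotheDiagram (w * swap g m) = (rotheDiagram w).erase (g, w m) := by
  have hmono := strictMonoOn_Ioi_of_descent_le w g hglast
  refine rotheDiagram_mul_swap hgm hwm (fun k hgk hkm => hmono hgk (hgk.trans hkm) hkm)
    fun k hmk => lt_of_not_ge fun hkg => (hmmax k (hgm.trans hmk) ?_).not_gt hmk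
  exact lt_of_le_of_ne hkg fun h => (hgm.trans hmk).ne' (w.injective h)

theorem isLowerSet_insert_of_north_mem {w : Perm (Fin n)}
    (hw : IsLowerSet (rotheDiagram w : Set (Fin n × Fin n))) {g : Fin n} {q : Fin n × Fin n}
    (hq : q ∈ rotheDiagram w) (hq₁ : (q.1 : ℕ) + 1 = g) (hq₂ : (q.2 : ℕ) = w g) :
    IsLowerSet (insert (g, w g) (rotheDiagram w : Set (Fin n × Fin n))) := by
  obtain ⟨i, j⟩ := q
  dsimp only at hq₁ hq₂
  obtain rfl : j = w g := Fin.ext hq₂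
  refine isLowerSet_insert hw fun ⟨i', j'⟩ hlt => ?_
  obtain ⟨hi'g, hj'g⟩ := Prod.mk_le_mk.1 hlt.le
  rcases hi'g.lt_or_eq with hi'g | rfl
  · exact hw (Prod.mk_le_mk.2 ⟨Fin.le_def.2 (by have := Fin.lt_def.1 hi'g; omega), hj'g⟩) hq
  · obtain ⟨k, rfl⟩ := w.surjective j'
    have hkg : w k < w i' := lt_of_le_of_ne hj'g fun h => hlt.ne (by rw [h])
    have hik : i < k := (mk_apply_mem_rotheDiagram.1 (hw (Prod.mk_le_mk.2 ⟨le_rfl, hj'g⟩) hq)).2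
    refine mk_apply_mem_rotheDiagram.2 ⟨hkg, lt_of_le_of_ne ?_ fun h => hkg.ne (by rw [h])⟩
    exact Fin.le_def.2 (by have := Fin.lt_def.1 hik; omega)

theorem isLowerSet_insert_of_west_mem {w : Perm (Fin n)}
    (hw : IsLowerSet (rotheDiagram w : Set (Fin n × Fin n))) {g : Fin n} {q : Fin n × Fin n}
    (hq : q ∈ rotheDiagram w) (hq₁ : (q.1 : ℕ) = g) (hq₂ : (q.2 : ℕ) + 1 = w g) :
    IsLowerSet (insert (g, w g) (rotheDiagram w : Set (Fin n × Fin n))) := by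
  obtain ⟨i, j⟩ := q
  dsimp only at hq₁ hq₂
  obtain rfl : i = g := Fin.ext hq₁
  refine isLowerSet_insert hw fun ⟨i', j'⟩ hlt => ?_
  obtain ⟨hi'i, hj'i⟩ := Prod.mk_le_mk.1 hlt.le
  rcases hj'i.lt_or_eq with hj'i | rfl
  · exact hw (Prod.mk_le_mk.2 ⟨hi'i, Fin.le_def.2 (by have := Fin.lt_def.1 hj'i; omega)⟩) hq
  · have hi'i : i' < i := lt_of_le_of_ne hi'i fun h => hlt.ne (by rw [h])
    have hji' : j < w i' := (mem_rotheDiagram.1 (hw (Prod.mk_le_mk.2 ⟨hi'i.le, le_rfl⟩) hq)).1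
    refine mk_apply_mem_rotheDiagram.2
      ⟨lt_of_le_of_ne ?_ fun h => hi'i.ne (w.injective h).symm, hi'i⟩
    exact Fin.le_def.2 (by have := Fin.lt_def.1 hji'; omega)

theorem not_adjacent_of_mem_rotheDiagram {w : Perm (Fin n)} {g : Fin n} {q : Fin n × Fin n}
    (hq : q ∈ rotheDiagram w) (hnorth : ¬((q.1 : ℕ) + 1 = g ∧ (q.2 : ℕ) = w g))
    (hwest : ¬((q.1 : ℕ) = g ∧ (q.2 : ℕ) + 1 = w g)) :
    ¬(((q.1 : ℕ) = g ∧ ((q.2 : ℕ) = w g + 1 ∨ (q.2 : ℕ) + 1 = w g)) ∨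
      ((q.2 : ℕ) = w g ∧ ((q.1 : ℕ) = g + 1 ∨ (q.1 : ℕ) + 1 = g))) := by
  obtain ⟨i, j⟩ := q
  dsimp only at hnorth hwest ⊢
  rintro (⟨hi, hj | hj⟩ | ⟨hj, hi | hi⟩)
  · obtain rfl : i = g := Fin.ext hi
    have hji : j < w i := (mem_rotheDiagram.1 hq).1
    have := Fin.lt_def.1 hji
    omega
  · exact hwest ⟨hi, hj⟩
  · obtain rfl : j = w g := Fin.ext hj
    have := Fin.lt_def.1 (mk_apply_mem_rotheDiagram.1 hq).2
    omega
  · exact hnorth ⟨hi, hj⟩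

end

theorem transition_dominant_drop_general (n : ℕ) (w : Equiv.Perm (Fin n))
    (g m : Fin n)
    (hglast : ∀ (j : Fin n) (hj : (j : ℕ) + 1 < n), w ⟨(j : ℕ) + 1, hj⟩ < w j → j ≤ g)
    (hgm : g < m) (hwm : w m < w g)
    (hmmax : ∀ m' : Fin n, g < m' → w m' < w g → m' ≤ m)
    (hnd : ¬ IsDominant w) (hd : IsDominant (w * Equiv.swap g m)) :
    (effRegion (w * Equiv.swap g m)).card + 2 ≤ (effRegion w).card ∧
    (∀ q ∈ rotheDiagram w, q ≠ (g, w m) →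
      ¬(((q.1 : ℕ) = (g : ℕ) ∧
            ((q.2 : ℕ) = (w m : ℕ) + 1 ∨ (q.2 : ℕ) + 1 = (w m : ℕ))) ∨
        ((q.2 : ℕ) = (w m : ℕ) ∧
            ((q.1 : ℕ) = (g : ℕ) + 1 ∨ (q.1 : ℕ) + 1 = (g : ℕ))))) ∧
    (∀ q ∈ effRegion (w * Equiv.swap g m),
      ¬((q.1 : ℕ) + 1 = (g : ℕ) ∧ (q.2 : ℕ) = (w m : ℕ))) ∧
    (∀ q ∈ effRegion (w * Equiv.swap g m),
      ¬((q.1 : ℕ) = (g : ℕ) ∧ (q.2 : ℕ) + 1 = (w m : ℕ))) := by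
  set W := w * swap g m
  have hWg : W g = w m := by simp [W]
  have hD : rotheDiagram W = (rotheDiagram w).erase (g, w m) :=
    rotheDiagram_mul_swap_of_lastDescent hglast hgm hwm hmmax
  have hc : (g, w m) ∈ rotheDiagram w := mk_apply_mem_rotheDiagram.2 ⟨hwm, hgm⟩
  have hlow := (isDominant_iff_isLowerSet W).1 hd
  have hins : (rotheDiagram w : Set (Fin n × Fin n)) =
      insert (g, W g) (rotheDiagram W : Set (Fin n × Fin n)) := by
    rw [hWg, hD, Finset.coe_erase, Set.insert_sdiff_singleton, Set.insert_eq_of_mem hc]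
  have hnorth : ∀ q ∈ rotheDiagram W, ¬((q.1 : ℕ) + 1 = g ∧ (q.2 : ℕ) = W g) := fun q hq h =>
    hnd ((isDominant_iff_isLowerSet w).2 (hins ▸ isLowerSet_insert_of_north_mem hlow hq h.1 h.2))
  have hwest : ∀ q ∈ rotheDiagram W, ¬((q.1 : ℕ) = g ∧ (q.2 : ℕ) + 1 = W g) := fun q hq h =>
    hnd ((isDominant_iff_isLowerSet w).2 (hins ▸ isLowerSet_insert_of_west_mem hlow hq h.1 h.2))
  rw [← hd, ← hWg]
  refine ⟨?_, fun q hq hne => ?_, hnorth, hwest⟩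
  · have hlt := Finset.card_lt_card ((rotheDiagram_subset_effRegion w).ssubset_of_ne hnd)
    have hpos := Finset.card_pos.2 ⟨_, hc⟩
    rw [hD, Finset.card_erase_of_mem hc]
    omega
  · have hqW : q ∈ rotheDiagram W := hD ▸ Finset.mem_erase.2 ⟨hWg ▸ hne, hq⟩
    exact not_adjacent_of_mem_rotheDiagram hqW (hnorth q hqW) (hwest q hqW)

/-- Transition step, dominant case (from the proof of Proposition 4.1): with `w ≠ 1`
of last descent `g`, `m > g` maximal with `w(m) < w(g)` and `w' = w t_{g↔m}`, if `w` is
not dominant but `w'` is dominant, then `|λ(w')| ≤ |λ(w)| - 2`; in particular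
`(g, w(m))` forms an entire connected component of `D(w)` (no other box of `D(w)` is
edge-adjacent to it), and `λ(w')` contains neither `(g-1, w(m))` nor `(g, w(m)-1)`. -/
theorem transition_dominant_drop (n : ℕ) (w : Equiv.Perm (Fin n)) (hw : w ≠ 1)
    (g m : Fin n) (hg1 : (g : ℕ) + 1 < n)
    (hgdesc : w ⟨(g : ℕ) + 1, hg1⟩ < w g)
    (hglast : ∀ (j : Fin n) (hj : (j : ℕ) + 1 < n), w ⟨(j : ℕ) + 1, hj⟩ < w j → j ≤ g)
    (hgm : g < m) (hwm : w m < w g)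
    (hmmax : ∀ m' : Fin n, g < m' → w m' < w g → m' ≤ m)
    (hnd : ¬ IsDominant w) (hd : IsDominant (w * Equiv.swap g m)) :
    (effRegion (w * Equiv.swap g m)).card + 2 ≤ (effRegion w).card ∧
    (∀ q ∈ rotheDiagram w, q ≠ (g, w m) →
      ¬(((q.1 : ℕ) = (g : ℕ) ∧
            ((q.2 : ℕ) = (w m : ℕ) + 1 ∨ (q.2 : ℕ) + 1 = (w m : ℕ))) ∨
        ((q.2 : ℕ) = (w m : ℕ) ∧
            ((q.1 : ℕ) = (g : ℕ) + 1 ∨ (q.1 : ℕ) + 1 = (g : ℕ))))) ∧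
    (∀ q ∈ effRegion (w * Equiv.swap g m),
      ¬((q.1 : ℕ) + 1 = (g : ℕ) ∧ (q.2 : ℕ) = (w m : ℕ))) ∧
    (∀ q ∈ effRegion (w * Equiv.swap g m),
      ¬((q.1 : ℕ) = (g : ℕ) ∧ (q.2 : ℕ) + 1 = (w m : ℕ))) :=
  transition_dominant_drop_general n w g m hglast hgm hwm hmmax hnd hd
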